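/- arXiv:1701.06664 — 3 statements merged into one kernel-verified Lean document; each statement's English description precedes it below -/
import Mathlib

section
/- Let C be an F_q-linear code of length n (a nonzero F_q-linear subspace of Fin n → F_q) of dimension k ≥ 1, and let d be its minimum distance (the minimum Hamming weight of a nonzero codeword). Suppose C has information locality l ≥ 1: there exists an information set I ⊆ Fin n with |I| = k (the projection of C to the coordinates in I is injective) such that for every i ∈ I there is a subset R_i ⊆ Fin n \ {i} with |R_i| ≤ l and coefficients (λ_{i,j})_{j ∈ R_i} in F_q with c i = Σ_{j ∈ R_i} λ_{i,j} · (c j) for every codeword c ∈ C. Then d ≤ n − k − ⌈k/l⌉ + 2. -/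
/-! For a set `T` of coordinates let `ν(T)` be the dimension of the subcode vanishing on `T`.
If `ν(T) ≥ 1`, a nonzero codeword vanishing on `T` shows `d ≤ n - |T|`. Adding a coordinate
lowers `ν` by at most one, so `ν(T) + |T|` is monotone in `T`. Starting from `T = ∅`, where
`ν = k`, repeatedly take a nonzero codeword vanishing on `T` and an information coordinate `i`
where it does not vanish, and add `i` together with its repair group `R_i`: as long as `ν > l`
this keeps `ν ≥ 1`, and `ν(T) + |T|` grows by at least one, since `i` is determined by `R_i`.
Once `ν ≤ l`, add coordinates one at a time until `ν = 1`. That makes at least `⌈k/l⌉ - 1`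
rounds, so `|T| ≥ k + ⌈k/l⌉ - 2` at the end. -/

/- The Hamming weight of a codeword: the number of nonzero coordinates. -/
open Classical in
noncomputable def hammingWt {F : Type} [Field F] {n : ℕ} (c : Fin n → F) : ℕ :=
  (Finset.univ.filter fun i => c i ≠ 0).card

/-- `I` is an information set for the linear code `C` if the restriction of codewords
to the coordinates in `I` is injective on `C`. -/
def IsInfoSetL {F : Type} [Field F] {n : ℕ}
    (C : Submodule F (Fin n → F)) (I : Finset (Fin n)) : Prop :=
  ∀ c ∈ C, ∀ c' ∈ C, (∀ i ∈ I, c i = c' i) → c = c'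

/-- The minimum distance of a (nonzero) linear code: the minimum Hamming weight of a
nonzero codeword. -/
noncomputable def dminL {F : Type} [Field F] {n : ℕ} (C : Submodule F (Fin n → F)) : ℕ :=
  sInf {w | ∃ c ∈ C, c ≠ 0 ∧ hammingWt c = w}

open Module

theorem Submodule.finrank_le_finrank_inf_ker_add_one {K V : Type*} [DivisionRing K]
    [AddCommGroup V] [Module K V] [FiniteDimensional K V] (p : Submodule K V) (f : V →ₗ[K] K) :
    finrank K p ≤ finrank K ↥(p ⊓ LinearMap.ker f) + 1 := by
  have hker : finrank K V ≤ finrank K (LinearMap.ker f) + 1 := by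
    have := f.finrank_range_add_finrank_ker
    have := (LinearMap.range f).finrank_le
    rw [finrank_self] at this
    omega
  have := p.finrank_sup_add_finrank_inf_eq (LinearMap.ker f)
  have := (p ⊔ LinearMap.ker f).finrank_le
  omega

theorem Int.ceil_div_le_of_le_mul {K : Type*} [Field K] [LinearOrder K] [IsStrictOrderedRing K]
    [FloorRing K] {a b c : ℕ} (h : a ≤ b * c) : ⌈(a : K) / b⌉ ≤ c := by
  rw [Int.ceil_le]
  rcases b.eq_zero_or_pos with rfl | hb
  · simp
  · rw [div_le_iff₀ (by exact_mod_cast hb)]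
    exact_mod_cast (by simpa [mul_comm] using h : a ≤ c * b)

theorem IsInfoSetL.exists_ne_zero {F : Type} [Field F] {n : ℕ} {C : Submodule F (Fin n → F)}
    {I : Finset (Fin n)} (hI : IsInfoSetL C I) {c : Fin n → F} (hc : c ∈ C) (hc0 : c ≠ 0) :
    ∃ i ∈ I, c i ≠ 0 := by
  by_contra! h
  exact hc0 (hI c hc 0 C.zero_mem h)

theorem hammingWt_add_card_le {F : Type} [Field F] {n : ℕ} {c : Fin n → F} {T : Finset (Fin n)}
    (hc : ∀ j ∈ T, c j = 0) : hammingWt c + T.card ≤ n := by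
  classical
  have hsupp : (Finset.univ.filter fun i => c i ≠ 0) ⊆ Tᶜ := fun i hi =>
    Finset.mem_compl.2 fun hiT => (Finset.mem_filter.1 hi).2 (hc i hiT)
  have hwt := Finset.card_le_card hsupp
  have hT := T.card_le_univ
  rw [Finset.card_compl, Fintype.card_fin] at hwt
  rw [Fintype.card_fin] at hT
  unfold hammingWt
  omega

theorem dminL_le_hammingWt {F : Type} [Field F] {n : ℕ} {C : Submodule F (Fin n → F)}
    {c : Fin n → F} (hc : c ∈ C) (hc0 : c ≠ 0) : dminL C ≤ hammingWt c :=
  Nat.sInf_le ⟨c, hc, hc0, rfl⟩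

namespace LinearCode

variable {F : Type} [Field F] {n : ℕ} (C : Submodule F (Fin n → F))

def vanishingSubcode (T : Finset (Fin n)) : Submodule F (Fin n → F) :=
  C ⊓ Submodule.pi (T : Set (Fin n)) fun _ => ⊥

variable {C} in
theorem mem_vanishingSubcode {T : Finset (Fin n)} {c : Fin n → F} :
    c ∈ vanishingSubcode C T ↔ c ∈ C ∧ ∀ j ∈ T, c j = 0 := by
  simp [vanishingSubcode]

theorem vanishingSubcode_empty : vanishingSubcode C ∅ = C := by
  ext c
  simp [mem_vanishingSubcode]

theorem vanishingSubcode_univ : vanishingSubcode C Finset.univ = ⊥ := by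
  ext c
  simp only [mem_vanishingSubcode, Finset.mem_univ, forall_const, Submodule.mem_bot]
  exact ⟨fun h => funext h.2, fun h => h ▸ ⟨C.zero_mem, fun _ => rfl⟩⟩

theorem vanishingSubcode_insert (j : Fin n) (T : Finset (Fin n)) :
    vanishingSubcode C (insert j T) = vanishingSubcode C T ⊓ LinearMap.ker (LinearMap.proj j) := by
  ext c
  simp only [Submodule.mem_inf, mem_vanishingSubcode, Finset.mem_insert, forall_eq_or_imp,
    LinearMap.mem_ker, LinearMap.proj_apply]
  tauto

theorem vanishingSubcode_insert_of_subset {i : Fin n} {R T : Finset (Fin n)} {lam : Fin n → F}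
    (hrep : ∀ c ∈ C, c i = ∑ j ∈ R, lam j * c j) (hRT : R ⊆ T) :
    vanishingSubcode C (insert i T) = vanishingSubcode C T := by
  refine le_antisymm (fun c hc => ?_) fun c hc => ?_
  · rw [vanishingSubcode_insert] at hc
    exact hc.1
  · rw [mem_vanishingSubcode] at hc
    rw [vanishingSubcode_insert]
    refine ⟨mem_vanishingSubcode.2 hc, ?_⟩
    change c i = 0
    rw [hrep c hc.1]
    exact Finset.sum_eq_zero fun j hj => by rw [hc.2 j (hRT hj), mul_zero]

noncomputable def nullity (T : Finset (Fin n)) : ℕ :=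
  finrank F (vanishingSubcode C T)

theorem nullity_empty : nullity C ∅ = finrank F C := by
  rw [nullity, vanishingSubcode_empty]

theorem nullity_univ : nullity C Finset.univ = 0 := by
  rw [nullity, vanishingSubcode_univ, finrank_bot]

theorem nullity_le_nullity_insert_add_one (j : Fin n) (T : Finset (Fin n)) :
    nullity C T ≤ nullity C (insert j T) + 1 := by
  rw [nullity, nullity, vanishingSubcode_insert]
  exact Submodule.finrank_le_finrank_inf_ker_add_one _ _

theorem nullity_add_card_le_insert (j : Fin n) (T : Finset (Fin n)) :
    nullity C T + T.card ≤ nullity C (insert j T) + (insert j T).card := by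
  by_cases hj : j ∈ T
  · rw [Finset.insert_eq_of_mem hj]
  · rw [Finset.card_insert_of_notMem hj]
    have := nullity_le_nullity_insert_add_one C j T
    omega

theorem nullity_add_card_le_of_subset {T T' : Finset (Fin n)} (h : T ⊆ T') :
    nullity C T + T.card ≤ nullity C T' + T'.card := by
  rw [← Finset.union_sdiff_of_subset h]
  induction T' \ T using Finset.induction_on with
  | empty => rw [Finset.union_empty]
  | insert j S _ ih =>
    rw [Finset.union_insert]
    exact ih.trans (nullity_add_card_le_insert C j _)

theorem exists_superset_nullity_eq {T : Finset (Fin n)} {m : ℕ} (hm : m ≤ nullity C T) :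
    ∃ T', T ⊆ T' ∧ nullity C T' = m := by
  suffices ∀ S : Finset (Fin n), nullity C (T ∪ S) ≤ m → ∃ T', T ⊆ T' ∧ nullity C T' = m by
    refine this Finset.univ ?_
    rw [Finset.union_eq_right.2 T.subset_univ, nullity_univ]
    exact m.zero_le
  intro S
  induction S using Finset.induction_on with
  | empty => exact fun h => ⟨T, subset_rfl, le_antisymm (by simpa using h) hm⟩
  | insert j S _ ih =>
    intro hS
    by_cases hlt : nullity C (T ∪ S) ≤ m
    · exact ih hlt
    · refine ⟨T ∪ insert j S, Finset.subset_union_left, ?_⟩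
      have := nullity_le_nullity_insert_add_one C j (T ∪ S)
      rw [Finset.union_insert] at hS ⊢
      omega

def IsLocallyRepairable (l : ℕ) (i : Fin n) : Prop :=
  ∃ R : Finset (Fin n), i ∉ R ∧ R.card ≤ l ∧
    ∃ lam : Fin n → F, ∀ c ∈ C, c i = ∑ j ∈ R, lam j * c j

variable {C} in
/-- `s` counts the rounds of the greedy construction; `nullity C T ≤ l * s` is
`⌈nullity C T / l⌉ ≤ s` without division. -/
theorem exists_nullity_eq_one {I : Finset (Fin n)} {l : ℕ} (hI : IsInfoSetL C I)
    (hrep : ∀ i ∈ I, IsLocallyRepairable C l i) (T : Finset (Fin n)) (hT : 1 ≤ nullity C T) :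
    ∃ T' s, nullity C T' = 1 ∧ T.card + nullity C T + s ≤ T'.card + 2 ∧ nullity C T ≤ l * s := by
  induction T using WellFoundedGT.induction with
  | _ T ih =>
  by_cases hsmall : nullity C T ≤ l
  · obtain ⟨T', hTT', hT'⟩ := exists_superset_nullity_eq C hT
    have := nullity_add_card_le_of_subset C hTT'
    exact ⟨T', 1, hT', by omega, by simpa using hsmall⟩
  · obtain ⟨c, hc, hc0⟩ := Submodule.exists_mem_ne_zero_of_ne_bot
      (Submodule.one_le_finrank_iff.1 hT)
    obtain ⟨hcC, hcT⟩ := mem_vanishingSubcode.1 hc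
    obtain ⟨i, hiI, hci⟩ := hI.exists_ne_zero hcC hc0
    obtain ⟨R, hiR, hRl, lam, hi⟩ := hrep i hiI
    have hiT : i ∉ T := fun h => hci (hcT i h)
    set U := insert i (T ∪ R)
    have hTU : T ⊂ U := (Finset.ssubset_insert hiT).trans_le
      (Finset.insert_subset_insert i Finset.subset_union_left)
    have hU : nullity C U = nullity C (T ∪ R) := by
      rw [nullity, vanishingSubcode_insert_of_subset C hi Finset.subset_union_right, nullity]
    have hcardU : U.card = (T ∪ R).card + 1 :=
      Finset.card_insert_of_notMem (by simp [hiT, hiR])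
    have hgain := nullity_add_card_le_of_subset C (Finset.subset_union_left : T ⊆ T ∪ R)
    have hunion := Finset.card_union_le T R
    obtain ⟨T', s, hT', hcard, hs⟩ := ih U hTU (by omega)
    refine ⟨T', s + 1, hT', by omega, ?_⟩
    rw [Nat.mul_succ]
    omega

variable {C} in
theorem dminL_add_card_le {T : Finset (Fin n)} (hT : 1 ≤ nullity C T) : dminL C + T.card ≤ n := by
  obtain ⟨c, hc, hc0⟩ := Submodule.exists_mem_ne_zero_of_ne_bot
    (Submodule.one_le_finrank_iff.1 hT)
  obtain ⟨hcC, hcT⟩ := mem_vanishingSubcode.1 hc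
  have := hammingWt_add_card_le hcT
  have := dminL_le_hammingWt hcC hc0
  omega

end LinearCode

theorem information_locality_singleton_bound_general {F : Type} [Field F] {n k l : ℕ}
    (hk : 1 ≤ k)
    (C : Submodule F (Fin n → F))
    (hdim : Module.finrank F C = k)
    (hloc : ∃ I : Finset (Fin n), I.card = k ∧ IsInfoSetL C I ∧
      ∀ i ∈ I, ∃ R : Finset (Fin n), i ∉ R ∧ R.card ≤ l ∧
        ∃ lam : Fin n → F, ∀ c ∈ C, c i = ∑ j ∈ R, lam j * c j) :
    (dminL C : ℤ) ≤ (n : ℤ) - (k : ℤ) - ⌈(k : ℚ) / (l : ℚ)⌉ + 2 := by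
  obtain ⟨I, -, hI, hrep⟩ := hloc
  have hempty : LinearCode.nullity C ∅ = k := by rw [LinearCode.nullity_empty, hdim]
  obtain ⟨T, s, hT, hcard, hks⟩ := LinearCode.exists_nullity_eq_one hI hrep ∅ (hempty ▸ hk)
  have hd := LinearCode.dminL_add_card_le hT.ge
  have hceil : ⌈(k : ℚ) / l⌉ ≤ s := Int.ceil_div_le_of_le_mul (hempty ▸ hks)
  rw [hempty, Finset.card_empty] at hcard
  omega

/-- Gopalan–Huang–Simitci–Yekhanin bound: a nonzero linear code of length `n`,
dimension `k ≥ 1` and information locality `l ≥ 1` (every coordinate of some information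
set of size `k` is a linear combination of at most `l` other coordinates, uniformly over
all codewords) has minimum distance `d ≤ n - k - ⌈k/l⌉ + 2`. -/
theorem information_locality_singleton_bound {F : Type} [Field F] [Fintype F] {n k l : ℕ}
    (hk : 1 ≤ k) (hl : 1 ≤ l)
    (C : Submodule F (Fin n → F)) (hC : C ≠ ⊥)
    (hdim : Module.finrank F C = k)
    (hloc : ∃ I : Finset (Fin n), I.card = k ∧ IsInfoSetL C I ∧
      ∀ i ∈ I, ∃ R : Finset (Fin n), i ∉ R ∧ R.card ≤ l ∧
        ∃ lam : Fin n → F, ∀ c ∈ C, c i = ∑ j ∈ R, lam j * c j) :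
    (dminL C : ℤ) ≤ (n : ℤ) - (k : ℤ) - ⌈(k : ℚ) / (l : ℚ)⌉ + 2 :=
  information_locality_singleton_bound_general hk C hdim hloc
end

section
/- Let C be a nonzero F_q-linear vector code of block length n and vector length α whose dimension over F_q equals K = kα for an integer k ≥ 1. Let l ≥ 1 and δ ≥ 1 be integers, and suppose C has (l, δ) information locality: there exist subsets S₁, …, S_m ⊆ Fin n such that (i) |S_i| ≤ l + δ − 1 for every i; (ii) for every i, every nonzero element of the punctured code C|_{S_i} (the image of the projection of C to the coordinates in S_i) has at least δ nonzero vector symbols; and (iii) the projection of C to the union S₁ ∪ ⋯ ∪ S_m is injective on C. Then the minimum distance of C satisfies d_min(C) ≤ n − k + 1 − (⌈k/l⌉ − 1)(δ − 1). -/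
/-!
Let `f A` be the dimension of the subcode of `C` vanishing on the coordinates in `A`. Adjoining
coordinates `D` lowers `f` by at most `α |D|`, so `α |A| + f A` is monotone in `A`. Starting from
`A = ∅`, repeatedly adjoin a local group `S i` on which some codeword vanishing on `A` is nonzero.
By the distance of `C|_{S i}`, a codeword vanishing on all but `δ - 1` coordinates of `S i`
vanishes on `S i`, so each step raises `α |A| + f A` by at least `(δ - 1) α` while lowering `f` by
at most `l α`. Hence after `⌈k/l⌉ - 1` steps `f A` is still positive; adjoining further single
coordinates while `f` stays positive yields `B` with `|B| ≥ k - 1 + (⌈k/l⌉ - 1)(δ - 1)` and a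
nonzero codeword vanishing on `B`.
-/

open Classical in
noncomputable def blockWeight {F : Type} [Field F] {n α : ℕ} (c : Fin n → Fin α → F) : ℕ :=
  (Finset.univ.filter fun i => c i ≠ 0).card

noncomputable def dmin {F : Type} [Field F] {n α : ℕ}
    (C : Submodule F (Fin n → Fin α → F)) : ℕ :=
  sInf {w | ∃ c ∈ C, c ≠ 0 ∧ blockWeight c = w}

open Module Finset

theorem Submodule.finrank_le_finrank_inf_ker_add {K M M₂ : Type*} [Field K] [AddCommGroup M]
    [Module K M] [AddCommGroup M₂] [Module K M₂] [FiniteDimensional K M₂] (p : Submodule K M)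
    [FiniteDimensional K p] (f : M →ₗ[K] M₂) :
    finrank K p ≤ finrank K ↥(p ⊓ LinearMap.ker f) + finrank K M₂ := by
  have hker : LinearMap.ker (f.domRestrict p) = (p ⊓ LinearMap.ker f).comap p.subtype := by
    ext; simp
  have := (f.domRestrict p).finrank_range_add_finrank_ker
  rw [hker, (Submodule.comapSubtypeEquivOfLe inf_le_left).finrank_eq] at this
  have := (LinearMap.range (f.domRestrict p)).finrank_le
  omega

theorem exists_natCast_eq_ceil_div_sub_one {k l : ℕ} (hk : 0 < k) (hl : 0 < l) :
    ∃ t : ℕ, (t : ℤ) = ⌈(k : ℚ) / l⌉ - 1 ∧ t * l < k := by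
  have hceil : 1 ≤ ⌈(k : ℚ) / l⌉ := Int.one_le_ceil_iff.mpr (by positivity)
  obtain ⟨t, ht⟩ := Int.eq_ofNat_of_zero_le (sub_nonneg.mpr hceil)
  refine ⟨t, ht.symm, ?_⟩
  have htq : (t : ℚ) < k / l := by
    have := Int.ceil_lt_add_one ((k : ℚ) / l)
    have htq : ((⌈(k : ℚ) / l⌉ - 1 : ℤ) : ℚ) = t := by exact_mod_cast ht
    push_cast at htq
    linarith
  rw [lt_div_iff₀ (by positivity)] at htq
  exact_mod_cast htq

section VanishingSubcode

variable {F ι V : Type*} [Field F] [AddCommGroup V] [Module F V]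

def vanishingSubcode (C : Submodule F (ι → V)) (A : Finset ι) : Submodule F (ι → V) :=
  C ⊓ Submodule.pi A fun _ => ⊥

variable {C : Submodule F (ι → V)}

theorem mem_vanishingSubcode {A : Finset ι} {c : ι → V} :
    c ∈ vanishingSubcode C A ↔ c ∈ C ∧ ∀ j ∈ A, c j = 0 := by
  simp [vanishingSubcode, Submodule.mem_pi]

theorem vanishingSubcode_empty : vanishingSubcode C ∅ = C := by
  ext; simp [mem_vanishingSubcode]

theorem vanishingSubcode_antitone : Antitone (vanishingSubcode C) :=
  fun _ _ hAB _ hc => mem_vanishingSubcode.mpr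
    ⟨(mem_vanishingSubcode.mp hc).1, fun j hj => (mem_vanishingSubcode.mp hc).2 j (hAB hj)⟩

variable [Fintype ι] [FiniteDimensional F V]

theorem finrank_vanishingSubcode_univ : finrank F (vanishingSubcode C univ) = 0 := by
  refine Submodule.finrank_eq_zero.mpr (eq_bot_iff.mpr fun c hc => ?_)
  exact funext fun j => (mem_vanishingSubcode.mp hc).2 j (mem_univ j)

variable [DecidableEq ι]

theorem finrank_vanishingSubcode_le_of_subset {A A' : Finset ι} (h : A ⊆ A') :
    finrank F (vanishingSubcode C A) ≤
      finrank F (vanishingSubcode C A') + #(A' \ A) * finrank F V := by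
  let restrict := LinearMap.funLeft F V ((↑) : ↥(A' \ A) → ι)
  have hker : vanishingSubcode C A' = vanishingSubcode C A ⊓ LinearMap.ker restrict := by
    ext c
    simp only [Submodule.mem_inf, mem_vanishingSubcode, LinearMap.mem_ker, funext_iff,
      restrict, LinearMap.funLeft_apply, Pi.zero_apply, Subtype.forall, mem_sdiff]
    constructor
    · exact fun ⟨hc, h0⟩ => ⟨⟨hc, fun j hj => h0 j (h hj)⟩, fun j hj => h0 j hj.1⟩
    · exact fun ⟨⟨hc, h0⟩, h1⟩ => ⟨hc, fun j hj => if hjA : j ∈ A then h0 j hjA else h1 j ⟨hj, hjA⟩⟩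
  have := (vanishingSubcode C A).finrank_le_finrank_inf_ker_add restrict
  rwa [← hker, finrank_pi_fintype, sum_const, card_univ, Fintype.card_coe, smul_eq_mul] at this

theorem exists_card_ge_of_finrank_vanishingSubcode_pos {A : Finset ι}
    (hA : 0 < finrank F (vanishingSubcode C A)) :
    ∃ B, 0 < finrank F (vanishingSubcode C B) ∧
      finrank F V * #A + finrank F (vanishingSubcode C A) ≤ finrank F V * (#B + 1) := by
  obtain ⟨B, hB, hBmax⟩ := exists_max_image
    ({B | A ⊆ B ∧ 0 < finrank F (vanishingSubcode C B)} : Finset (Finset ι)) card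
    ⟨A, by simp [hA]⟩
  simp only [mem_filter, mem_univ, true_and, and_imp] at hB hBmax
  obtain ⟨hAB, hBpos⟩ := hB
  have hBsmall : finrank F (vanishingSubcode C B) ≤ finrank F V := by
    by_contra! hlarge
    obtain ⟨j, hj⟩ : ∃ j, j ∉ B := by
      by_contra! hall
      rw [eq_univ_of_forall hall, finrank_vanishingSubcode_univ] at hBpos
      exact hBpos.false
    have hstep := finrank_vanishingSubcode_le_of_subset (C := C) (subset_insert j B)
    rw [insert_sdiff_cancel hj, card_singleton, one_mul] at hstep
    have := hBmax _ (hAB.trans (subset_insert j B)) (by omega)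
    rw [card_insert_of_notMem hj] at this
    omega
  refine ⟨B, hBpos, ?_⟩
  have hgrow := finrank_vanishingSubcode_le_of_subset (C := C) hAB
  have hcard := card_sdiff_add_card_eq_card hAB
  calc finrank F V * #A + finrank F (vanishingSubcode C A)
      ≤ finrank F V * #A + #(B \ A) * finrank F V + finrank F V := by omega
    _ = finrank F V * (#B + 1) := by rw [← hcard]; ring

theorem exists_finrank_vanishingSubcode_union_lt {κ : Type*} {S : κ → Finset ι}
    (hS_cover : ∀ c ∈ C, (∀ i, ∀ j ∈ S i, c j = 0) → c = 0) {A : Finset ι}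
    (hA : 0 < finrank F (vanishingSubcode C A)) :
    ∃ i, finrank F (vanishingSubcode C (A ∪ S i)) < finrank F (vanishingSubcode C A) := by
  obtain ⟨c, hc, hc0⟩ := Submodule.exists_mem_ne_zero_of_ne_bot (Submodule.one_le_finrank_iff.mp hA)
  obtain ⟨hcC, -⟩ := mem_vanishingSubcode.mp hc
  obtain ⟨i, j, hj, hcj⟩ : ∃ i, ∃ j ∈ S i, c j ≠ 0 := by
    by_contra! h
    exact hc0 (hS_cover c hcC h)
  refine ⟨i, Submodule.finrank_lt_finrank_of_lt (lt_of_le_of_ne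
    (vanishingSubcode_antitone subset_union_left) fun heq => hcj ?_)⟩
  exact (mem_vanishingSubcode.mp (heq ▸ hc)).2 j (mem_union_right _ hj)

end VanishingSubcode

section Locality

variable {F ι V : Type*} [Field F] [AddCommGroup V] [Module F V] {C : Submodule F (ι → V)}
  [DecidableEq ι] [DecidableEq V] {l δ : ℕ}

theorem vanishingSubcode_union_sdiff_of_card_lt {S : Finset ι}
    (hS : ∀ c ∈ C, (∃ j ∈ S, c j ≠ 0) → δ ≤ #{j ∈ S | c j ≠ 0}) {A D : Finset ι} (hD : #D < δ) :
    vanishingSubcode C (A ∪ (S \ D)) = vanishingSubcode C (A ∪ S) := by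
  refine le_antisymm (fun c hc => ?_)
    (vanishingSubcode_antitone (union_subset_union_right sdiff_subset))
  obtain ⟨hcC, hc0⟩ := mem_vanishingSubcode.mp hc
  refine mem_vanishingSubcode.mpr ⟨hcC, fun j hj => ?_⟩
  rcases mem_union.mp hj with hjA | hjS
  · exact hc0 j (mem_union_left _ hjA)
  by_contra hcj
  have hsupp : {j ∈ S | c j ≠ 0} ⊆ D := fun x hx => by
    rw [mem_filter] at hx
    by_contra hxD
    exact hx.2 (hc0 x (mem_union_right _ (mem_sdiff.mpr ⟨hx.1, hxD⟩)))
  have := hS c hcC ⟨j, hjS, hcj⟩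
  have := card_le_card hsupp
  omega

variable [Fintype ι] [FiniteDimensional F V]

theorem finrank_vanishingSubcode_union_le {S : Finset ι} (hS_card : #S ≤ l + δ - 1)
    (hS_dist : ∀ c ∈ C, (∃ j ∈ S, c j ≠ 0) → δ ≤ #{j ∈ S | c j ≠ 0}) (hδ : 1 ≤ δ)
    {A : Finset ι}
    (hlt : finrank F (vanishingSubcode C (A ∪ S)) < finrank F (vanishingSubcode C A)) :
    finrank F (vanishingSubcode C A) ≤ finrank F (vanishingSubcode C (A ∪ S)) + l * finrank F V ∧
      finrank F V * #A + finrank F (vanishingSubcode C A) + (δ - 1) * finrank F V ≤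
        finrank F V * #(A ∪ S) + finrank F (vanishingSubcode C (A ∪ S)) := by
  have hnew : δ ≤ #(S \ A) := by
    by_contra! hfew
    have htrim := vanishingSubcode_union_sdiff_of_card_lt hS_dist (A := A) hfew
    rw [show A ∪ (S \ (S \ A)) = A by simp] at htrim
    exact hlt.ne' (by rw [htrim])
  obtain ⟨D, hDsub, hDcard⟩ := exists_subset_card_eq (show δ - 1 ≤ #(S \ A) by omega)
  have hgrow :=
    finrank_vanishingSubcode_le_of_subset (C := C) (subset_union_left (s₁ := A) (s₂ := S \ D))
  rw [vanishingSubcode_union_sdiff_of_card_lt hS_dist (by omega), union_sdiff_left,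
    sdiff_right_comm, card_sdiff_of_subset hDsub, hDcard] at hgrow
  have hcard : #(A ∪ S) = #A + #(S \ A) := by
    rw [← card_union_of_disjoint disjoint_sdiff, union_sdiff_self_eq_union]
  obtain ⟨e, he⟩ := Nat.exists_eq_add_of_le (show δ - 1 ≤ #(S \ A) by omega)
  rw [he, Nat.add_sub_cancel_left] at hgrow
  have hel : e ≤ l := by have := card_le_card (sdiff_subset (s := S) (t := A)); omega
  refine ⟨hgrow.trans (by gcongr), ?_⟩
  rw [hcard, he]
  linarith

theorem exists_vanishingSubcode_of_mul_lt_finrank {κ : Type*} {S : κ → Finset ι}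
    (hS_card : ∀ i, #(S i) ≤ l + δ - 1)
    (hS_dist : ∀ i, ∀ c ∈ C, (∃ j ∈ S i, c j ≠ 0) → δ ≤ #{j ∈ S i | c j ≠ 0})
    (hS_cover : ∀ c ∈ C, (∀ i, ∀ j ∈ S i, c j = 0) → c = 0) (hδ : 1 ≤ δ) :
    ∀ t, t * l * finrank F V < finrank F C → ∃ A,
      finrank F C ≤ finrank F (vanishingSubcode C A) + t * l * finrank F V ∧
      finrank F C + t * (δ - 1) * finrank F V ≤
        finrank F V * #A + finrank F (vanishingSubcode C A)
  | 0, _ => ⟨∅, by rw [vanishingSubcode_empty]; simp⟩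
  | t + 1, ht => by
    have hstep : (t + 1) * l * finrank F V = t * l * finrank F V + l * finrank F V := by ring
    obtain ⟨A, hf, hg⟩ :=
      exists_vanishingSubcode_of_mul_lt_finrank hS_card hS_dist hS_cover hδ t (by omega)
    obtain ⟨i, hi⟩ := exists_finrank_vanishingSubcode_union_lt hS_cover (A := A) (by omega)
    obtain ⟨hf', hg'⟩ := finrank_vanishingSubcode_union_le (hS_card i) (hS_dist i) hδ hi
    refine ⟨A ∪ S i, by omega, ?_⟩
    have : (t + 1) * (δ - 1) * finrank F V = t * (δ - 1) * finrank F V + (δ - 1) * finrank F V :=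
      by ring
    omega

end Locality

open Classical in
theorem dmin_add_card_le {F : Type} [Field F] {n α : ℕ} {C : Submodule F (Fin n → Fin α → F)}
    {B : Finset (Fin n)} (hB : 0 < finrank F (vanishingSubcode C B)) : dmin C + #B ≤ n := by
  obtain ⟨c, hc, hc0⟩ :=
    Submodule.exists_mem_ne_zero_of_ne_bot (Submodule.one_le_finrank_iff.mp hB)
  obtain ⟨hcC, hcB⟩ := mem_vanishingSubcode.mp hc
  have hweight : blockWeight c ≤ #Bᶜ :=
    card_le_card fun j hj => mem_compl.mpr fun hjB => (mem_filter.mp hj).2 (hcB j hjB)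
  have hdmin : dmin C ≤ blockWeight c := Nat.sInf_le ⟨c, hcC, hc0, rfl⟩
  have hsplit := card_compl_add_card B
  rw [Fintype.card_fin] at hsplit
  omega

open Classical in
theorem locality_l_delta_distance_bound_general {F : Type} [Field F] {n α k l δ : ℕ}
    (hk : 1 ≤ k) (hl : 1 ≤ l) (hδ : 1 ≤ δ)
    (C : Submodule F (Fin n → Fin α → F)) (hC : C ≠ ⊥)
    (hdim : Module.finrank F C = k * α)
    (hloc : ∃ (m : ℕ) (S : Fin m → Finset (Fin n)),
      (∀ i, (S i).card ≤ l + δ - 1) ∧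
      (∀ i, ∀ c ∈ C, (∃ j ∈ S i, c j ≠ 0) →
        δ ≤ ((S i).filter fun j => c j ≠ 0).card) ∧
      (∀ c ∈ C, ∀ c' ∈ C, (∀ j : Fin n, (∃ i, j ∈ S i) → c j = c' j) → c = c')) :
    (dmin C : ℤ) ≤ (n : ℤ) - (k : ℤ) + 1 - (⌈(k : ℚ) / (l : ℚ)⌉ - 1) * ((δ : ℤ) - 1) := by
  obtain ⟨m, S, hS_card, hS_dist, hS_inj⟩ := hloc
  have hS_cover : ∀ c ∈ C, (∀ i, ∀ j ∈ S i, c j = 0) → c = 0 := fun c hc h =>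
    hS_inj c hc 0 C.zero_mem fun j ⟨i, hj⟩ => h i j hj
  have hα : 0 < α := Nat.pos_of_mul_pos_left (hdim ▸ Submodule.one_le_finrank_iff.mpr hC)
  obtain ⟨t, ht, htl⟩ := exists_natCast_eq_ceil_div_sub_one hk hl
  have htlα : t * l * α < k * α := Nat.mul_lt_mul_of_pos_right htl hα
  obtain ⟨A, hf, hg⟩ := exists_vanishingSubcode_of_mul_lt_finrank hS_card hS_dist hS_cover hδ t
    (by rwa [finrank_fin_fun, hdim])
  rw [finrank_fin_fun, hdim] at hf hg
  obtain ⟨B, hB, hBcard⟩ := exists_card_ge_of_finrank_vanishingSubcode_pos (C := C) (A := A)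
    (by omega)
  rw [finrank_fin_fun] at hBcard
  have hcard : k + t * (δ - 1) ≤ #B + 1 := Nat.le_of_mul_le_mul_left (by linarith) hα
  have hd := dmin_add_card_le hB
  rw [← ht]
  zify [hδ] at hcard hd
  linarith

open Classical in
theorem locality_l_delta_distance_bound {F : Type} [Field F] [Fintype F] {n α k l δ : ℕ}
    (hk : 1 ≤ k) (hl : 1 ≤ l) (hδ : 1 ≤ δ)
    (C : Submodule F (Fin n → Fin α → F)) (hC : C ≠ ⊥)
    (hdim : Module.finrank F C = k * α)
    (hloc : ∃ (m : ℕ) (S : Fin m → Finset (Fin n)),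
      (∀ i, (S i).card ≤ l + δ - 1) ∧
      (∀ i, ∀ c ∈ C, (∃ j ∈ S i, c j ≠ 0) →
        δ ≤ ((S i).filter fun j => c j ≠ 0).card) ∧
      (∀ c ∈ C, ∀ c' ∈ C, (∀ j : Fin n, (∃ i, j ∈ S i) → c j = c' j) → c = c')) :
    (dmin C : ℤ) ≤ (n : ℤ) - (k : ℤ) + 1 - (⌈(k : ℚ) / (l : ℚ)⌉ - 1) * ((δ : ℤ) - 1) :=
  locality_l_delta_distance_bound_general hk hl hδ C hC hdim hloc
end

section
/- Let F_q be a finite field and let C₀ be an (n₀, κ) MDS vector code of vector length α given by an injective linear encoding E : D → (Fin n₀ → (Fin α → F_q)) with dim_{F_q} D = κα, meaning that every subset of Fin n₀ of cardinality κ is an information set for C₀. Let l ≥ 1 and δ ≥ 2 be integers with δ − 1 ≤ n₀ − κ, and form a new code C' by splitting each of δ − 1 designated coordinates of the encoding (the first δ − 1 parity maps e_j) into l linear maps summing to e_j, keeping all other coordinates; C' has block length n = n₀ + (l − 1)(δ − 1). Then the minimum distance of C' satisfies d_min(C') ≥ n₀ − κ + 1 = n − κ + 1 − (l − 1)(δ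 − 1). -/
/-! Nonzero messages of an MDS code vanish on fewer than `κ` coordinates, so their
encodings have at least `n₀ - κ + 1` nonzero symbols. Splitting a coordinate
`e j = f₁ + ⋯ + f_l` cannot destroy a nonzero symbol: if `e j x ≠ 0` then some `f_s x ≠ 0`.
Hence the weight of `x` in the split code is at least its weight in the original code. -/

open Finset

section

variable {R D M ι : Type*} [Semiring R] [AddCommMonoid D] [Module R D]
  [AddCommMonoid M] [Module R M] [DecidableEq M] [Fintype ι]

theorem card_sub_lt_card_support_of_mds (e : ι → D →ₗ[R] M) {κ : ℕ}
    (hκ : κ ≤ Fintype.card ι)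
    (hMDS : ∀ I : Finset ι, I.card = κ → ∀ x y : D, (∀ i ∈ I, e i x = e i y) → x = y)
    {x : D} (hx : x ≠ 0) :
    Fintype.card ι - κ < #{i | e i x ≠ 0} := by
  by_contra! h
  have hzeros : κ ≤ #{i | e i x = 0} := by
    have := card_filter_add_card_filter_not (s := univ) (fun i => e i x = 0)
    simp only [card_univ, ne_eq] at this h ⊢
    omega
  obtain ⟨I, hIzeros, hIcard⟩ := exists_subset_card_eq hzeros
  refine hx (hMDS I hIcard x 0 fun i hi => ?_)
  rw [map_zero]
  exact (mem_filter.mp (hIzeros hi)).2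

theorem card_support_le_card_unsplit_add_card_pieces [DecidableEq ι]
    {T S : Type*} [Fintype T] [Fintype S] (e : ι → D →ₗ[R] M) (j : T → ι)
    (f : T → S → D →ₗ[R] M) (hsplit : ∀ t, ∑ s, f t s = e (j t)) (x : D) :
    #{i | e i x ≠ 0} ≤
      #{i | (∀ t, j t ≠ i) ∧ e i x ≠ 0} + #{p : T × S | f p.1 p.2 x ≠ 0} := by
  have hsplitSupport :
      #{i | (∃ t, j t = i) ∧ e i x ≠ 0} ≤ #{p : T × S | f p.1 p.2 x ≠ 0} := by
    refine (card_le_card fun i hi => ?_).trans (card_image_le (f := fun p => j p.1))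
    obtain ⟨⟨t, rfl⟩, hne⟩ := (mem_filter.mp hi).2
    rw [← hsplit t, LinearMap.sum_apply] at hne
    obtain ⟨s, -, hs⟩ := exists_ne_zero_of_sum_ne_zero hne
    exact mem_image.mpr ⟨(t, s), mem_filter.mpr ⟨mem_univ _, hs⟩, rfl⟩
  calc #{i | e i x ≠ 0}
      = #{i | (∃ t, j t = i) ∧ e i x ≠ 0} + #{i | (∀ t, j t ≠ i) ∧ e i x ≠ 0} := by
        rw [← card_filter_add_card_filter_not (s := {i | e i x ≠ 0}) (fun i => ∃ t, j t = i),
          filter_filter, filter_filter]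
        simp only [and_comm, not_exists]
    _ ≤ _ := by omega

end

open Classical in
theorem parity_splitting_mds_distance_bound_general {F : Type} [Field F]
    (D : Type) [AddCommGroup D] [Module F D]
    {n₀ κ α l δ : ℕ} (hκ : 1 ≤ κ) (hα : 1 ≤ α) (hδ : 2 ≤ δ)
    (hδκ : δ - 1 ≤ n₀ - κ)
    (e : Fin n₀ → (D →ₗ[F] (Fin α → F)))
    (hdim : Module.finrank F D = κ * α)
    (hMDS : ∀ I : Finset (Fin n₀), I.card = κ →
      ∀ x y : D, (∀ i ∈ I, e i x = e i y) → x = y)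
    (ι : Fin (δ - 1) → Fin n₀)
    (f : Fin (δ - 1) → Fin l → (D →ₗ[F] (Fin α → F)))
    (hsplit : ∀ t : Fin (δ - 1), ∑ s, f t s = e (ι t)) :
    n₀ - κ + 1 ≤
        sInf {w : ℕ | ∃ x : D, x ≠ 0 ∧
          w = (Finset.univ.filter fun i : Fin n₀ =>
                (∀ t, ι t ≠ i) ∧ e i x ≠ 0).card +
              (Finset.univ.filter fun p : Fin (δ - 1) × Fin l => f p.1 p.2 x ≠ 0).card} ∧
      n₀ - κ + 1 = (n₀ + (l - 1) * (δ - 1)) - κ + 1 - (l - 1) * (δ - 1) := by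
  have hκn : κ ≤ Fintype.card (Fin n₀) := by rw [Fintype.card_fin]; omega
  refine ⟨le_csInf ?_ ?_, by omega⟩
  · have : Nontrivial D := Module.nontrivial_of_finrank_pos (R := F) (by rw [hdim]; positivity)
    obtain ⟨x, hx⟩ := exists_ne (0 : D)
    exact ⟨_, x, hx, rfl⟩
  · rintro w ⟨x, hx, rfl⟩
    have hweight := card_sub_lt_card_support_of_mds e hκn hMDS hx
    have hsplitWeight := card_support_le_card_unsplit_add_card_pieces e ι f hsplit x
    rw [Fintype.card_fin] at hweight
    -- `congr!` reconciles the instance `Nat.decidableForallFin` in the statement with the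
    -- `Fintype` one produced by the lemma
    exact hweight.trans_le (hsplitWeight.trans_eq (by congr!))

open Classical in
theorem parity_splitting_mds_distance_bound {F : Type} [Field F] [Fintype F]
    (D : Type) [AddCommGroup D] [Module F D] [FiniteDimensional F D]
    {n₀ κ α l δ : ℕ} (hκ : 1 ≤ κ) (hα : 1 ≤ α) (hl : 1 ≤ l) (hδ : 2 ≤ δ)
    (hδκ : δ - 1 ≤ n₀ - κ)
    (e : Fin n₀ → (D →ₗ[F] (Fin α → F)))
    (hdim : Module.finrank F D = κ * α)
    (hinj : Function.Injective fun x : D => fun i : Fin n₀ => e i x)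
    (hMDS : ∀ I : Finset (Fin n₀), I.card = κ →
      ∀ x y : D, (∀ i ∈ I, e i x = e i y) → x = y)
    (ι : Fin (δ - 1) → Fin n₀) (hι : Function.Injective ι)
    (f : Fin (δ - 1) → Fin l → (D →ₗ[F] (Fin α → F)))
    (hsplit : ∀ t : Fin (δ - 1), ∑ s, f t s = e (ι t)) :
    n₀ - κ + 1 ≤
        sInf {w : ℕ | ∃ x : D, x ≠ 0 ∧
          w = (Finset.univ.filter fun i : Fin n₀ =>
                (∀ t, ι t ≠ i) ∧ e i x ≠ 0).card +
              (Finset.univ.filter fun p : Fin (δ - 1) × Fin l => f p.1 p.2 x ≠ 0).card} ∧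
      n₀ - κ + 1 = (n₀ + (l - 1) * (δ - 1)) - κ + 1 - (l - 1) * (δ - 1) :=
  parity_splitting_mds_distance_bound_general D hκ hα hδ hδκ e hdim hMDS ι f hsplit
end
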